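/- (Corollary on uniqueness) Assume p_M > 0 for all M ∈ D_I. Let τ : A(I) → A(I) be a linear map and let τ^ι = η ∘ τ ∘ η^{-1} : A(ι(I)) → A(ι(I)) be its copy, where η : A(I) → A(ι(I)) is the *-isomorphism determined by η(a_l) = a_{ι(l)} for l ∈ I. If fermionic standard quantum detailed balance holds, i.e. φ(a τ^ι(b)) = φ(τ(a) b) for all a ∈ A(I) and b ∈ A(ι(I)), then τ^ι is the unique linear map β : A(ι(I)) → A(ι(I)) satisfying φ(a β(b)) = φ(τ(a) b) for all a ∈ A(I) and b ∈ A(ι(I)). -/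

import Mathlib

noncomputable section
open scoped InnerProductSpace ComplexConjugate
open ContinuousLinearMap

namespace Fermion

variable (L : Type) [Fintype L] [LinearOrder L]

/-- The fermionic Fock space over the one-particle space `h = ℓ²(L)`, realized concretely
via its orthonormal basis indexed by the finite subsets of `L` (the vectors `f_M`). -/
abbrev FockSpace := EuclideanSpace ℂ (Finset L)

variable {L}

/-- The vacuum vector `Ψ = f_∅`. -/
def vac : FockSpace L := EuclideanSpace.single ∅ 1

/-- Jordan–Wigner sign factor. -/
def jwSign (l : L) (S : Finset L) : ℂ := (-1 : ℂ) ^ (S.filter (fun k => k < l)).card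

/-- The creation operator `a*_l = a*(e_l)`. -/
def cre (l : L) : FockSpace L →L[ℂ] FockSpace L :=
  LinearMap.toContinuousLinearMap <|
    (EuclideanSpace.basisFun (Finset L) ℂ).toBasis.constr ℂ fun S =>
      if l ∈ S then 0 else jwSign l S • EuclideanSpace.single (insert l S) 1

/-- The annihilation operator `a_l = a(e_l)`. -/
def ann (l : L) : FockSpace L →L[ℂ] FockSpace L := ContinuousLinearMap.adjoint (cre l)

/-- The vector `f_{(l_1,…,l_n)} = a*_{l_1} ⋯ a*_{l_n} Ψ  (= P (e_{l_1} ⊗ ⋯ ⊗ e_{l_n}))`. -/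
def fvec (M : List L) : FockSpace L := M.foldr (fun l v => cre l v) vac

/-- The algebra `A(I)` : the unital *-subalgebra of `B(H)` generated by `{a_l : l ∈ I}`. -/
def A (I : Finset L) : StarSubalgebra ℂ (FockSpace L →L[ℂ] FockSpace L) :=
  StarAlgebra.adjoin ℂ (ann '' (I : Set L))

/-- The trace on `B(H)`. -/
def Tr (T : FockSpace L →L[ℂ] FockSpace L) : ℂ := LinearMap.trace ℂ (FockSpace L) T

/-- The rank-one operator `|x⟩⟨y|`. -/
def ketbra (x y : FockSpace L) : FockSpace L →L[ℂ] FockSpace L :=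
  (ContinuousLinearMap.toSpanSingleton ℂ x).comp (innerSL ℂ y)

/-- A valid choice of `D_I`: `D S` enumerates the finite set `S` without repetitions. -/
def IsEnum (D : Finset L → List L) : Prop := ∀ S : Finset L, (D S).Nodup ∧ (D S).toFinset = S

/-- The entangled vector `Φ = Σ_{M ∈ D_I} p_M^{1/2} f_{M ι(M)}`. -/
def Phi (D : Finset L → List L) (p : Finset L → ℝ) (I : Finset L) (ι : L → L) : FockSpace L :=
  ∑ S ∈ I.powerset, (Real.sqrt (p S) : ℂ) • fvec (D S ++ (D S).map ι)

/-- The state `φ(x) = ⟨Φ, xΦ⟩`. -/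
def phi (D : Finset L → List L) (p : Finset L → ℝ) (I : Finset L) (ι : L → L)
    (x : FockSpace L →L[ℂ] FockSpace L) : ℂ :=
  ⟪Phi D p I ι, x (Phi D p I ι)⟫_ℂ

/-!
If `β` and `τ^ι` both satisfy the balance condition, then `d = β b - τ^ι b ∈ A(ι(I))` satisfies
`⟨a⋆Φ, dΦ⟩ = φ(a d) = 0` for every `a ∈ A(I)`. In the basis `|T⟩` of occupation states,
`Φ = Σ_S c_S |S ∪ ι(S)⟩` with every `c_S ≠ 0` because `p_S > 0`. Projecting onto the
`I`-occupation `U`, annihilating `U` and creating `V` (all inside `A(I)`) sends `Φ` to a multiple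
of `|V ∪ ι(U)⟩`, so `dΦ ⊥ |V ∪ ι(U)⟩`. On the other hand `d` only acts on the `J`-modes: it
commutes with the sign-twisted embeddings `|Y⟩ ↦ χ(R, Y) |R ∪ Y⟩` of the `J`-mode states into each
sector of fixed occupation `R` outside `J`. Hence `⟨V ∪ ι(U)| d Φ⟩ = ± c_V ⟨ι(U)| d |ι(V)⟩`: the
`J`-block of `d` vanishes, and it determines `d`.
-/

lemma union_eq_iff_sdiff_eq_and_inter_eq {α : Type*} [DecidableEq α] {J R Z X : Finset α}
    (hR : Disjoint R J) (hZ : Z ⊆ J) : R ∪ Z = X ↔ X \ J = R ∧ X ∩ J = Z := by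
  constructor
  · rintro rfl
    have hRJ : ∀ x ∈ R, x ∉ J := fun _ h => Finset.disjoint_left.1 hR h
    constructor <;> ext x <;> grind
  · rintro ⟨rfl, rfl⟩
    exact Finset.sdiff_union_inter X J

section Signs

variable {L : Type} [LinearOrder L]

lemma conj_jwSign (l : L) (S : Finset L) : conj (jwSign l S) = jwSign l S := by
  simp [jwSign]

lemma jwSign_mul_self (l : L) (S : Finset L) : jwSign l S * jwSign l S = 1 := by
  simp [jwSign, ← pow_add, ← two_mul, pow_mul]

lemma jwSign_ne_zero (l : L) (S : Finset L) : jwSign l S ≠ 0 := by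
  simp [jwSign]

lemma jwSign_union {R Y : Finset L} (l : L) (h : Disjoint R Y) :
    jwSign l (R ∪ Y) = jwSign l R * jwSign l Y := by
  rw [jwSign, jwSign, jwSign, Finset.filter_union,
    Finset.card_union_of_disjoint (Finset.disjoint_filter_filter h), pow_add]

def chi (R W : Finset L) : ℂ := ∏ j ∈ W, jwSign j R

lemma conj_chi (R W : Finset L) : conj (chi R W) = chi R W := by
  simp [chi, map_prod, conj_jwSign]

lemma chi_mul_self (R W : Finset L) : chi R W * chi R W = 1 := by
  simp [chi, ← Finset.prod_mul_distrib, jwSign_mul_self]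

lemma chi_ne_zero (R W : Finset L) : chi R W ≠ 0 :=
  Finset.prod_ne_zero_iff.2 fun j _ => jwSign_ne_zero j R

lemma chi_insert {R W : Finset L} {j : L} (hj : j ∉ W) :
    chi R (insert j W) = jwSign j R * chi R W :=
  Finset.prod_insert hj

lemma jwSign_mul_chi_erase {R W : Finset L} {j : L} (hj : j ∈ W) :
    jwSign j R * chi R (W.erase j) = chi R W :=
  Finset.mul_prod_erase W (fun i => jwSign i R) hj

end Signs

variable {L : Type} [Fintype L] [LinearOrder L]

def ket (S : Finset L) : FockSpace L := EuclideanSpace.single S 1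

def ofBasis (f : Finset L → FockSpace L) : FockSpace L →L[ℂ] FockSpace L :=
  LinearMap.toContinuousLinearMap <| (EuclideanSpace.basisFun (Finset L) ℂ).toBasis.constr ℂ f

lemma basisFun_eq_ket (S : Finset L) :
    (EuclideanSpace.basisFun (Finset L) ℂ).toBasis S = ket S := by
  simp [ket]

lemma ofBasis_ket (f : Finset L → FockSpace L) (S : Finset L) : ofBasis f (ket S) = f S := by
  rw [ofBasis, ← basisFun_eq_ket]
  exact Module.Basis.constr_basis _ ℂ f S

lemma inner_ket_left (S : Finset L) (v : FockSpace L) : ⟪ket S, v⟫_ℂ = v S := by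
  simp [ket, EuclideanSpace.inner_single_left]

lemma inner_ket_ket (X Y : Finset L) : ⟪ket X, ket Y⟫_ℂ = if X = Y then 1 else 0 := by
  simp [ket, EuclideanSpace.inner_single_left]

lemma ext_inner_ket {v w : FockSpace L} (h : ∀ S, ⟪ket S, v⟫_ℂ = ⟪ket S, w⟫_ℂ) :
    v = w :=
  PiLp.ext fun S => by simpa only [inner_ket_left] using h S

lemma ext_ket {x y : FockSpace L →L[ℂ] FockSpace L} (h : ∀ S, x (ket S) = y (ket S)) :
    x = y :=
  ContinuousLinearMap.coe_injective <| (EuclideanSpace.basisFun (Finset L) ℂ).toBasis.ext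
    fun S => by simpa [basisFun_eq_ket] using h S

lemma cre_ket (l : L) (S : Finset L) :
    cre l (ket S) = if l ∈ S then 0 else jwSign l S • ket (insert l S) :=
  ofBasis_ket _ S

lemma ann_ket (l : L) (S : Finset L) :
    ann l (ket S) = if l ∈ S then jwSign l (S.erase l) • ket (S.erase l) else 0 := by
  refine ext_inner_ket fun T => ?_
  rw [ann, ContinuousLinearMap.adjoint_inner_right, cre_ket]
  by_cases hT : l ∈ T
  · have hne : T ≠ S.erase l := fun h => Finset.notMem_erase l S (h ▸ hT)
    split_ifs <;> simp [inner_ket_ket, hne]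
  · by_cases hS : l ∈ S
    · have hiff : insert l T = S ↔ T = S.erase l :=
        ⟨fun h => h ▸ (Finset.erase_insert hT).symm, fun h => h ▸ Finset.insert_erase hS⟩
      by_cases h : T = S.erase l
      · subst h
        rw [if_neg hT, if_pos hS, Finset.insert_erase hS, inner_smul_left, inner_smul_right,
          inner_ket_ket, inner_ket_ket, if_pos rfl, if_pos rfl, conj_jwSign]
      · simp [hT, hS, inner_smul_left, inner_ket_ket, hiff, h]
    · have hne : insert l T ≠ S := fun h => hS (h ▸ Finset.mem_insert_self l T)
      simp [hT, hS, inner_smul_left, inner_ket_ket, hne]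

lemma star_ann (l : L) : star (ann l) = cre l := by
  rw [ContinuousLinearMap.star_eq_adjoint, ann, ContinuousLinearMap.adjoint_adjoint]

/-- Embeds the `J`-mode states into the sector with occupation `R` outside `J`; the Jordan–Wigner
sign `chi R T` is what makes it commute with `A J`. -/
def sectorEmbedding (J R : Finset L) : FockSpace L →L[ℂ] FockSpace L :=
  ofBasis fun T => if T ⊆ J then chi R T • ket (R ∪ T) else 0

lemma sectorEmbedding_ket (J R T : Finset L) :
    sectorEmbedding J R (ket T) = if T ⊆ J then chi R T • ket (R ∪ T) else 0 :=
  ofBasis_ket _ T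

lemma adjoint_sectorEmbedding_ket {J R : Finset L} (hR : Disjoint R J) (X : Finset L) :
    adjoint (sectorEmbedding J R) (ket X) =
      if X \ J = R then chi R (X ∩ J) • ket (X ∩ J) else 0 := by
  refine ext_inner_ket fun Z => ?_
  rw [adjoint_inner_right, sectorEmbedding_ket]
  by_cases hZ : Z ⊆ J
  · rw [if_pos hZ, inner_smul_left, inner_ket_ket, conj_chi]
    by_cases h : R ∪ Z = X
    · obtain ⟨rfl, rfl⟩ := (union_eq_iff_sdiff_eq_and_inter_eq hR hZ).1 h
      rw [if_pos h, if_pos rfl, inner_smul_right, inner_ket_ket, if_pos rfl]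
    · rw [if_neg h, mul_zero]
      split_ifs with hX
      · have hZX : Z ≠ X ∩ J := fun hZX =>
          h ((union_eq_iff_sdiff_eq_and_inter_eq hR hZ).2 ⟨hX, hZX.symm⟩)
        rw [inner_smul_right, inner_ket_ket, if_neg hZX, mul_zero]
      · rw [inner_zero_right]
  · have hne : Z ≠ X ∩ J := fun h => hZ (h ▸ Finset.inter_subset_right)
    split_ifs <;> simp [inner_ket_ket, hne]

lemma commute_ann_sectorEmbedding {J R : Finset L} (hR : Disjoint R J) {j : L} (hj : j ∈ J) :
    Commute (ann j) (sectorEmbedding J R) := by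
  have hjR : j ∉ R := Finset.disjoint_right.1 hR hj
  refine ext_ket fun T => ?_
  simp only [mul_apply_eq_comp, sectorEmbedding_ket, ann_ket]
  by_cases hjT : j ∈ T
  · have hsub : T.erase j ⊆ J ↔ T ⊆ J :=
      ⟨fun h => (Finset.insert_erase hjT).symm.subset.trans (Finset.insert_subset hj h),
        fun h => (Finset.erase_subset j T).trans h⟩
    by_cases hT : T ⊆ J
    · have hRT : Disjoint R (T.erase j) :=
        Finset.disjoint_of_subset_right ((Finset.erase_subset j T).trans hT) hR
      have hRTe : (R ∪ T).erase j = R ∪ T.erase j := by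
        rw [Finset.erase_union_distrib, Finset.erase_eq_of_notMem hjR]
      rw [if_pos hT, if_pos hjT, map_smul, map_smul, sectorEmbedding_ket, if_pos (hsub.2 hT),
        ann_ket, if_pos (Finset.mem_union_right R hjT), smul_smul, smul_smul, hRTe,
        jwSign_union j hRT, ← jwSign_mul_chi_erase hjT]
      congr 1
      linear_combination (chi R (T.erase j) * jwSign j (T.erase j)) * jwSign_mul_self j R
    · rw [if_neg hT, if_pos hjT, map_zero, map_smul, sectorEmbedding_ket,
        if_neg (mt hsub.1 hT), smul_zero]
  · have hjRT : j ∉ R ∪ T := by simp [hjR, hjT]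
    split_ifs <;> simp [ann_ket, hjRT]

lemma commute_cre_sectorEmbedding {J R : Finset L} (hR : Disjoint R J) {j : L} (hj : j ∈ J) :
    Commute (cre j) (sectorEmbedding J R) := by
  have hjR : j ∉ R := Finset.disjoint_right.1 hR hj
  refine ext_ket fun T => ?_
  simp only [mul_apply_eq_comp, sectorEmbedding_ket, cre_ket]
  by_cases hjT : j ∈ T
  · split_ifs <;> simp [cre_ket, hjT]
  · have hsub : insert j T ⊆ J ↔ T ⊆ J := by simp [Finset.insert_subset_iff, hj]
    by_cases hT : T ⊆ J
    · have hjRT : j ∉ R ∪ T := by simp [hjR, hjT]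
      rw [if_pos hT, if_neg hjT, map_smul, map_smul, sectorEmbedding_ket, if_pos (hsub.2 hT),
        cre_ket, if_neg hjRT, smul_smul, smul_smul, ← Finset.union_insert,
        jwSign_union j (Finset.disjoint_of_subset_right hT hR), chi_insert hjT]
      ring_nf
    · rw [if_neg hT, if_neg hjT, map_zero, map_smul, sectorEmbedding_ket, if_neg (mt hsub.1 hT),
        smul_zero]

lemma commute_sectorEmbedding_of_mem_A {J R : Finset L} (hR : Disjoint R J)
    {d : FockSpace L →L[ℂ] FockSpace L} (hd : d ∈ A J) : Commute d (sectorEmbedding J R) := by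
  have hle : (A J).toSubalgebra ≤ Subalgebra.centralizer ℂ {sectorEmbedding J R} := by
    rw [A, StarAlgebra.adjoin_toSubalgebra]
    refine Algebra.adjoin_le ?_
    rintro x (⟨j, hj, rfl⟩ | ⟨j, hj, hx⟩) _ rfl
    · exact (commute_ann_sectorEmbedding hR hj).symm
    · rw [← star_star x, ← hx, star_ann]
      exact (commute_cre_sectorEmbedding hR hj).symm
  exact (Subalgebra.mem_centralizer_iff ℂ |>.1 (hle hd) _ rfl).symm

lemma inner_ket_apply_union_of_mem_A {J R Y : Finset L} (hR : Disjoint R J) (hY : Y ⊆ J)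
    {d : FockSpace L →L[ℂ] FockSpace L} (hd : d ∈ A J) (X : Finset L) :
    ⟪ket X, d (ket (R ∪ Y))⟫_ℂ =
      if X \ J = R then chi R (X ∩ J) * chi R Y * ⟪ket (X ∩ J), d (ket Y)⟫_ℂ else 0 := by
  have hket : ket (R ∪ Y) = chi R Y • sectorEmbedding J R (ket Y) := by
    rw [sectorEmbedding_ket, if_pos hY, smul_smul, chi_mul_self, one_smul]
  rw [hket, map_smul, ← mul_apply_eq_comp, (commute_sectorEmbedding_of_mem_A hR hd).eq,
    mul_apply_eq_comp, inner_smul_right, ← adjoint_inner_left, adjoint_sectorEmbedding_ket hR]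
  split_ifs
  · rw [inner_smul_left, conj_chi]
    ring
  · rw [inner_zero_left, mul_zero]

lemma eq_zero_of_mem_A_of_inner_ket_eq_zero {J : Finset L} {d : FockSpace L →L[ℂ] FockSpace L}
    (hd : d ∈ A J) (h : ∀ Y ⊆ J, ∀ Y' ⊆ J, ⟪ket Y, d (ket Y')⟫_ℂ = 0) : d = 0 := by
  refine ext_ket fun Z => ext_inner_ket fun X => ?_
  rw [zero_apply, inner_zero_right, ← Finset.sdiff_union_inter Z J,
    inner_ket_apply_union_of_mem_A Finset.sdiff_disjoint Finset.inter_subset_right hd,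
    h _ Finset.inter_subset_right _ Finset.inter_subset_right]
  simp

lemma cre_mul_ann_ket (l : L) (S : Finset L) :
    (cre l * ann l) (ket S) = if l ∈ S then ket S else 0 := by
  rw [mul_apply_eq_comp, ann_ket]
  split_ifs with hS
  · rw [map_smul, cre_ket, if_neg (Finset.notMem_erase l S), Finset.insert_erase hS, smul_smul,
      jwSign_mul_self, one_smul]
  · exact map_zero _

lemma ann_mul_cre_ket (l : L) (S : Finset L) :
    (ann l * cre l) (ket S) = if l ∈ S then 0 else ket S := by
  rw [mul_apply_eq_comp, cre_ket]
  split_ifs with hS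
  · exact map_zero _
  · rw [map_smul, ann_ket, if_pos (Finset.mem_insert_self l S), Finset.erase_insert hS, smul_smul,
      jwSign_mul_self, one_smul]

def occupationFactor (V : Finset L) (l : L) : FockSpace L →L[ℂ] FockSpace L :=
  if l ∈ V then cre l * ann l else ann l * cre l

lemma occupationFactor_ket (V : Finset L) (l : L) (T : Finset L) :
    occupationFactor V l (ket T) = if (l ∈ T ↔ l ∈ V) then ket T else 0 := by
  rw [occupationFactor]
  by_cases hV : l ∈ V
  · rw [if_pos hV, cre_mul_ann_ket]
    simp [hV]
  · rw [if_neg hV, ann_mul_cre_ket]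
    by_cases hT : l ∈ T <;> simp [hV, hT]

def occupationProj (I V : Finset L) : FockSpace L →L[ℂ] FockSpace L :=
  (I.toList.map (occupationFactor V)).prod

lemma list_prod_occupationFactor_ket (V : Finset L) (ls : List L) (T : Finset L) :
    (ls.map (occupationFactor V)).prod (ket T) =
      if ∀ l ∈ ls, (l ∈ T ↔ l ∈ V) then ket T else 0 := by
  induction ls with
  | nil => simp
  | cons l ls ih =>
    rw [List.map_cons, List.prod_cons, mul_apply_eq_comp, ih]
    by_cases hls : ∀ x ∈ ls, (x ∈ T ↔ x ∈ V)
    · rw [if_pos hls, occupationFactor_ket]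
      simp only [List.forall_mem_cons, and_iff_left hls]
    · rw [if_neg hls, map_zero]
      simp [hls]

lemma occupationProj_ket (I V T : Finset L) :
    occupationProj I V (ket T) = if T ∩ I = V ∩ I then ket T else 0 := by
  rw [occupationProj, list_prod_occupationFactor_ket]
  congr 1
  simp only [Finset.mem_toList, Finset.ext_iff, Finset.mem_inter, eq_iff_iff]
  grind

lemma exists_list_prod_ann_ket {N : List L} (hN : N.Nodup) {T : Finset L}
    (hNT : N.toFinset ⊆ T) :
    ∃ s : ℂ, s ≠ 0 ∧ (N.map ann).prod (ket T) = s • ket (T \ N.toFinset) := by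
  induction N with
  | nil => exact ⟨1, one_ne_zero, by simp⟩
  | cons l N ih =>
    rw [List.nodup_cons] at hN
    rw [List.toFinset_cons, Finset.insert_subset_iff] at hNT
    obtain ⟨s, hs, h⟩ := ih hN.2 hNT.2
    have hl : l ∈ T \ N.toFinset := Finset.mem_sdiff.2 ⟨hNT.1, by simpa using hN.1⟩
    refine ⟨jwSign l ((T \ N.toFinset).erase l) * s, mul_ne_zero (jwSign_ne_zero _ _) hs, ?_⟩
    rw [List.map_cons, List.prod_cons, mul_apply_eq_comp, h, map_smul, ann_ket, if_pos hl,
      smul_smul, mul_comm, List.toFinset_cons, Finset.sdiff_insert]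

lemma exists_list_prod_cre_ket {N : List L} (hN : N.Nodup) {T : Finset L}
    (hNT : Disjoint N.toFinset T) :
    ∃ s : ℂ, s ≠ 0 ∧ (N.map cre).prod (ket T) = s • ket (T ∪ N.toFinset) := by
  induction N with
  | nil => exact ⟨1, one_ne_zero, by simp⟩
  | cons l N ih =>
    rw [List.nodup_cons] at hN
    rw [List.toFinset_cons, Finset.disjoint_insert_left] at hNT
    obtain ⟨s, hs, h⟩ := ih hN.2 hNT.2
    have hl : l ∉ T ∪ N.toFinset := by simpa [hNT.1] using hN.1
    refine ⟨jwSign l (T ∪ N.toFinset) * s, mul_ne_zero (jwSign_ne_zero _ _) hs, ?_⟩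
    rw [List.map_cons, List.prod_cons, mul_apply_eq_comp, h, map_smul, cre_ket, if_neg hl,
      smul_smul, mul_comm, List.toFinset_cons, Finset.union_insert]

lemma fvec_eq_list_prod (M : List L) : fvec M = (M.map cre).prod (ket ∅) := by
  induction M with
  | nil => rfl
  | cons l M ih => rw [fvec, List.foldr_cons, ← fvec, ih, List.map_cons, List.prod_cons,
      mul_apply_eq_comp]

lemma exists_fvec_eq {M : List L} (hM : M.Nodup) :
    ∃ s : ℂ, s ≠ 0 ∧ fvec M = s • ket M.toFinset := by
  obtain ⟨s, hs, h⟩ := exists_list_prod_cre_ket hM (Finset.disjoint_empty_right _)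
  exact ⟨s, hs, by rw [fvec_eq_list_prod, h, Finset.empty_union]⟩

lemma ann_mem_A {I : Finset L} {l : L} (hl : l ∈ I) : ann l ∈ A I :=
  StarAlgebra.subset_adjoin ℂ _ ⟨l, hl, rfl⟩

lemma cre_mem_A {I : Finset L} {l : L} (hl : l ∈ I) : cre l ∈ A I :=
  star_ann l ▸ star_mem (ann_mem_A hl)

lemma list_prod_map_mem_A {I : Finset L} {f : L → FockSpace L →L[ℂ] FockSpace L}
    (hf : ∀ l ∈ I, f l ∈ A I) {N : List L} (hN : ∀ l ∈ N, l ∈ I) : (N.map f).prod ∈ A I :=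
  list_prod_mem fun _ hx => by
    obtain ⟨l, hl, rfl⟩ := List.mem_map.1 hx
    exact hf l (hN l hl)

lemma occupationProj_mem_A (I V : Finset L) : occupationProj I V ∈ A I := by
  refine list_prod_map_mem_A (fun l hl => ?_) fun l => Finset.mem_toList.1
  rw [occupationFactor]
  split_ifs
  · exact mul_mem (cre_mem_A hl) (ann_mem_A hl)
  · exact mul_mem (ann_mem_A hl) (cre_mem_A hl)

lemma occupationProj_apply_sum {I : Finset L} {ι : L → L} (hdisj : Disjoint I (I.image ι))
    (c : Finset L → ℂ) {U : Finset L} (hU : U ⊆ I) :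
    occupationProj I U (∑ S ∈ I.powerset, c S • ket (S ∪ S.image ι)) =
      c U • ket (U ∪ U.image ι) := by
  have hcap : ∀ S ⊆ I, (S ∪ S.image ι) ∩ I = S := fun S hS =>
    ((union_eq_iff_sdiff_eq_and_inter_eq (hdisj.mono_right (Finset.image_subset_image hS)).symm
      hS).1 (Finset.union_comm _ _)).2
  rw [map_sum, Finset.sum_eq_single_of_mem U (Finset.mem_powerset.2 hU)]
  · rw [map_smul, occupationProj_ket, if_pos (by rw [hcap U hU, Finset.inter_eq_left.2 hU])]
  · intro S hS hSU
    rw [map_smul, occupationProj_ket, hcap S (Finset.mem_powerset.1 hS),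
      Finset.inter_eq_left.2 hU, if_neg hSU, smul_zero]

lemma exists_mem_A_apply_sum_eq_ket {I : Finset L} {ι : L → L} (hdisj : Disjoint I (I.image ι))
    (c : Finset L → ℂ) {U V : Finset L} (hU : U ⊆ I) (hV : V ⊆ I) (hcU : c U ≠ 0) :
    ∃ b ∈ A I, b (∑ S ∈ I.powerset, c S • ket (S ∪ S.image ι)) = ket (V ∪ U.image ι) := by
  obtain ⟨s₁, hs₁, hann⟩ := exists_list_prod_ann_ket U.nodup_toList
    (T := U ∪ U.image ι) (by simp)
  obtain ⟨s₂, hs₂, hcre⟩ := exists_list_prod_cre_ket V.nodup_toList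
    (T := U.image ι) (by simpa using hdisj.mono hV (Finset.image_subset_image hU))
  refine ⟨(c U * s₁ * s₂)⁻¹ • ((V.toList.map cre).prod * (U.toList.map ann).prod *
    occupationProj I U), ?_, ?_⟩
  · refine SMulMemClass.smul_mem _ (mul_mem (mul_mem ?_ ?_) (occupationProj_mem_A I U))
    · exact list_prod_map_mem_A (fun _ => cre_mem_A) fun l hl => hV (Finset.mem_toList.1 hl)
    · exact list_prod_map_mem_A (fun _ => ann_mem_A) fun l hl => hU (Finset.mem_toList.1 hl)
  · rw [smul_apply, mul_apply_eq_comp, mul_apply_eq_comp, occupationProj_apply_sum hdisj c hU,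
      map_smul, hann,
      Finset.toList_toFinset,
      Finset.union_sdiff_cancel_left (hdisj.mono hU (Finset.image_subset_image hU)), map_smul,
      map_smul, hcre, Finset.toList_toFinset, Finset.union_comm, smul_smul, smul_smul, smul_smul,
      mul_assoc, mul_assoc, ← mul_assoc (c U), inv_mul_cancel₀ (by simp [hcU, hs₁, hs₂]),
      one_smul]

lemma exists_Phi_eq_sum {D : Finset L → List L} {p : Finset L → ℝ} {I : Finset L} {ι : L → L}
    (hD : IsEnum D) (hinj : Set.InjOn ι (I : Set L)) (hdisj : Disjoint I (I.image ι))
    (hppos : ∀ S ∈ I.powerset, 0 < p S) :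
    ∃ c : Finset L → ℂ, (∀ S ∈ I.powerset, c S ≠ 0) ∧
      Phi D p I ι = ∑ S ∈ I.powerset, c S • ket (S ∪ S.image ι) := by
  have hfvec : ∀ S ∈ I.powerset, ∃ s : ℂ, s ≠ 0 ∧
      fvec (D S ++ (D S).map ι) = s • ket (S ∪ S.image ι) := by
    intro S hS
    obtain ⟨hnd, htf⟩ := hD S
    have hmem : ∀ x ∈ D S, x ∈ I := fun x hx =>
      Finset.mem_powerset.1 hS (htf ▸ List.mem_toFinset.2 hx)
    have hnodup : (D S ++ (D S).map ι).Nodup := by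
      refine List.nodup_append.2 ⟨hnd,
        hnd.map_on fun x hx y hy h => hinj (hmem x hx) (hmem y hy) h, fun x hx y hy hxy => ?_⟩
      obtain ⟨z, hz, rfl⟩ := List.mem_map.1 hy
      exact Finset.disjoint_left.1 hdisj (hmem x hx)
        (hxy ▸ Finset.mem_image_of_mem ι (hmem z hz))
    obtain ⟨s, hs, h⟩ := exists_fvec_eq hnodup
    refine ⟨s, hs, ?_⟩
    have himg : ((D S).map ι).toFinset = S.image ι := by
      conv_rhs => rw [← htf]
      ext
      simp
    rw [h, List.toFinset_append, htf, himg]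
  choose! γ hγ using hfvec
  refine ⟨fun S => Real.sqrt (p S) * γ S, fun S hS => mul_ne_zero ?_ (hγ S hS).1, ?_⟩
  · exact_mod_cast (Real.sqrt_pos.2 (hppos S hS)).ne'
  · rw [Phi]
    refine Finset.sum_congr rfl fun S hS => ?_
    rw [(hγ S hS).2, smul_smul]

lemma inner_ket_apply_sum_of_mem_A {I : Finset L} {ι : L → L} (hdisj : Disjoint I (I.image ι))
    (c : Finset L → ℂ) {d : FockSpace L →L[ℂ] FockSpace L} (hd : d ∈ A (I.image ι))
    {U V : Finset L} (hU : U ⊆ I) (hV : V ⊆ I) :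
    ⟪ket (V ∪ U.image ι), d (∑ S ∈ I.powerset, c S • ket (S ∪ S.image ι))⟫_ℂ =
      c V * (chi V (U.image ι) * chi V (V.image ι) *
        ⟪ket (U.image ι), d (ket (V.image ι))⟫_ℂ) := by
  obtain ⟨hsdiff, hinter⟩ := (union_eq_iff_sdiff_eq_and_inter_eq (hdisj.mono_left hV)
    (Finset.image_subset_image hU)).1 rfl
  have hentry : ∀ S ⊆ I, ⟪ket (V ∪ U.image ι), d (ket (S ∪ S.image ι))⟫_ℂ =
      if V = S then
        chi S (U.image ι) * chi S (S.image ι) * ⟪ket (U.image ι), d (ket (S.image ι))⟫_ℂ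
      else 0 := fun S hS => by
    rw [inner_ket_apply_union_of_mem_A (hdisj.mono_left hS) (Finset.image_subset_image hS) hd,
      hsdiff, hinter]
  rw [map_sum, inner_sum, Finset.sum_eq_single_of_mem V (Finset.mem_powerset.2 hV)]
  · rw [map_smul, inner_smul_right, hentry V hV, if_pos rfl]
  · intro S hS hSV
    rw [map_smul, inner_smul_right, hentry S (Finset.mem_powerset.1 hS),
      if_neg fun h => hSV h.symm, mul_zero]

lemma phi_sub (D : Finset L → List L) (p : Finset L → ℝ) (I : Finset L) (ι : L → L)
    (x y : FockSpace L →L[ℂ] FockSpace L) :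
    phi D p I ι (x - y) = phi D p I ι x - phi D p I ι y := by
  rw [phi, phi, phi, sub_apply, inner_sub_right]

theorem eq_zero_of_phi_mul_eq_zero {D : Finset L → List L} {p : Finset L → ℝ} {I : Finset L}
    {ι : L → L} (hD : IsEnum D) (hinj : Set.InjOn ι (I : Set L))
    (hdisj : Disjoint I (I.image ι)) (hppos : ∀ S ∈ I.powerset, 0 < p S)
    {d : FockSpace L →L[ℂ] FockSpace L} (hd : d ∈ A (I.image ι))
    (h : ∀ a ∈ A I, phi D p I ι (a * d) = 0) : d = 0 := by
  obtain ⟨c, hc, hPhi⟩ := exists_Phi_eq_sum hD hinj hdisj hppos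
  refine eq_zero_of_mem_A_of_inner_ket_eq_zero hd fun Y hY Y' hY' => ?_
  obtain ⟨U, hU, rfl⟩ := Finset.subset_image_iff.1 hY
  obtain ⟨V, hV, rfl⟩ := Finset.subset_image_iff.1 hY'
  obtain ⟨b, hb, hbΦ⟩ :=
    exists_mem_A_apply_sum_eq_ket hdisj c hU hV (hc U (Finset.mem_powerset.2 hU))
  have h0 := h (star b) (star_mem hb)
  rw [phi, mul_apply_eq_comp, star_eq_adjoint, adjoint_inner_right, hPhi, hbΦ,
    inner_ket_apply_sum_of_mem_A hdisj c hd hU hV] at h0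
  simpa [hc V (Finset.mem_powerset.2 hV), chi_ne_zero] using h0

theorem detailed_balance_dual_unique_general
    {L : Type} [Fintype L] [LinearOrder L]
    (I J : Finset L) (ι : L → L)
    (hinj : Set.InjOn ι (I : Set L)) (himg : I.image ι = J) (hIJ : Disjoint I J)
    (D : Finset L → List L) (hD : IsEnum D)
    (p : Finset L → ℝ)
    (hppos : ∀ S ∈ I.powerset, 0 < p S)
    (τ : A I →ₗ[ℂ] A I)
    (η : A I ≃⋆ₐ[ℂ] A (I.image ι))
    -- fermionic standard quantum detailed balance for `(A(I), ρ_I, τ)`: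
    (hdb : ∀ (a : A I) (b : A (I.image ι)),
      phi D p I ι ((a : FockSpace L →L[ℂ] FockSpace L) * (η (τ (η.symm b))))
        = phi D p I ι ((τ a : FockSpace L →L[ℂ] FockSpace L) * b)) :
    ∀ β : A (I.image ι) → A (I.image ι),
      (∀ (a : A I) (b : A (I.image ι)),
        phi D p I ι ((a : FockSpace L →L[ℂ] FockSpace L) * (β b))
          = phi D p I ι ((τ a : FockSpace L →L[ℂ] FockSpace L) * b)) →
      β = fun b => η (τ (η.symm b)) := by
  intro β hβ
  funext b
  have hdisj : Disjoint I (I.image ι) := himg ▸ hIJ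
  refine Subtype.ext <| sub_eq_zero.1 <| eq_zero_of_phi_mul_eq_zero hD hinj hdisj hppos
    (sub_mem (β b).2 (η (τ (η.symm b))).2) fun a ha => ?_
  rw [mul_sub, phi_sub]
  exact sub_eq_zero.2 ((hβ ⟨a, ha⟩ b).trans (hdb ⟨a, ha⟩ b).symm)

/-- Corollary on uniqueness. Assume `p_M > 0` for all `M ∈ D_I`. Let
`τ : A(I) → A(I)` be a linear map and `τ^ι = η ∘ τ ∘ η⁻¹` its copy on `A(ι(I))`, where
`η : A(I) → A(ι(I))` is the *-isomorphism determined by `η(a_l) = a_{ι(l)}` for `l ∈ I`.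
If fermionic standard quantum detailed balance holds, i.e. `φ(a τ^ι(b)) = φ(τ(a) b)` for all
`a ∈ A(I)`, `b ∈ A(ι(I))`, then `τ^ι` is the unique map `β : A(ι(I)) → A(ι(I))` satisfying
`φ(a β(b)) = φ(τ(a) b)` for all such `a, b`. -/
theorem detailed_balance_dual_unique
    {L : Type} [Fintype L] [LinearOrder L]
    (I J : Finset L) (ι : L → L)
    (hinj : Set.InjOn ι (I : Set L)) (himg : I.image ι = J) (hIJ : Disjoint I J)
    (D : Finset L → List L) (hD : IsEnum D)
    (p : Finset L → ℝ)
    (hppos : ∀ S ∈ I.powerset, 0 < p S) (hp1 : ∑ S ∈ I.powerset, p S = 1)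
    (τ : A I →ₗ[ℂ] A I)
    (η : A I ≃⋆ₐ[ℂ] A (I.image ι))
    (hη : ∀ l ∈ I, ∀ (hl : ann l ∈ A I),
      ((η ⟨ann l, hl⟩ : A (I.image ι)) : FockSpace L →L[ℂ] FockSpace L) = ann (ι l))
    -- fermionic standard quantum detailed balance for `(A(I), ρ_I, τ)`:
    (hdb : ∀ (a : A I) (b : A (I.image ι)),
      phi D p I ι ((a : FockSpace L →L[ℂ] FockSpace L) * (η (τ (η.symm b))))
        = phi D p I ι ((τ a : FockSpace L →L[ℂ] FockSpace L) * b)) :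
    ∀ β : A (I.image ι) → A (I.image ι),
      (∀ (a : A I) (b : A (I.image ι)),
        phi D p I ι ((a : FockSpace L →L[ℂ] FockSpace L) * (β b))
          = phi D p I ι ((τ a : FockSpace L →L[ℂ] FockSpace L) * b)) →
      β = fun b => η (τ (η.symm b)) :=
  detailed_balance_dual_unique_general I J ι hinj himg hIJ D hD p hppos τ η hdb

end Fermion
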